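/- arXiv:1207.6193 — 2 statements merged into one kernel-verified Lean document; each statement's English description precedes it below -/
import Mathlib

section
/- Let R be a noetherian commutative ring, I an ideal of R, M a finitely generated R-module, and N a submodule of M. Then there exists a natural number k such that for all n ≥ m with n - m ≥ k, the natural map (I^n M ∩ N)/I^n N → (I^m M ∩ N)/I^m N of quotient modules is the zero map. -/
section ARHelper

universe u v

variable {R : Type u} [CommRing R] {M : Type v} [AddCommGroup M] [Module R M]

/-- Lift of a submodule to `ULift` scalars and module. -/
private def Submodule.upLift (p : Submodule R M) :
    Submodule (ULift.{v} R) (ULift.{u} M) where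
  carrier := ULift.down ⁻¹' p
  add_mem' := fun {a b} ha hb => p.add_mem ha hb
  zero_mem' := p.zero_mem
  smul_mem' := fun c {x} hx => p.smul_mem c.down hx

private lemma Submodule.mem_upLift (p : Submodule R M) (x : ULift.{u} M) :
    x ∈ p.upLift ↔ x.down ∈ p := Iff.rfl

private lemma mem_map_uliftRingEquiv (J : Ideal R) (r : ULift.{v} R) :
    r ∈ J.map (ULift.ringEquiv.symm : R ≃+* ULift.{v} R) ↔ r.down ∈ J := by
  rw [← Ideal.comap_symm, Ideal.mem_comap]
  rfl

private lemma smul_upLift (J : Ideal R) (p : Submodule R M) :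
    J.map (ULift.ringEquiv.symm : R ≃+* ULift.{v} R) • p.upLift = (J • p).upLift := by
  apply le_antisymm
  · apply Submodule.smul_le.2
    intro r hr x hx
    rw [mem_map_uliftRingEquiv] at hr
    exact Submodule.smul_mem_smul hr hx
  · intro x hx
    rw [Submodule.mem_upLift] at hx
    have : ∀ z : M, z ∈ J • p →
        (⟨z⟩ : ULift.{u} M) ∈ J.map (ULift.ringEquiv.symm : R ≃+* ULift.{v} R) • p.upLift := by
      intro z hz
      refine Submodule.smul_induction_on hz ?_ ?_
      · intro r hr m hm
        exact Submodule.smul_mem_smul ((mem_map_uliftRingEquiv J ⟨r⟩).2 hr) hm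
      · intro y z hy hz
        exact Submodule.add_mem _ hy hz
    exact this x.down hx

end ARHelper

/-- Pro-system reformulation of the Artin–Rees lemma: for a noetherian commutative
ring `R`, an ideal `I`, a finitely generated module `M` and a submodule `N ⊆ M`,
there is `k` such that for `n ≥ m` with `n - m ≥ k` the natural map
`(I^n M ∩ N)/I^n N → (I^m M ∩ N)/I^m N` is zero, i.e. `I^n M ∩ N ⊆ I^m N`. -/
theorem artin_rees_pro_system_zero
    {R : Type*} [CommRing R] [IsNoetherianRing R] (I : Ideal R)
    {M : Type*} [AddCommGroup M] [Module R M] [Module.Finite R M]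
    (N : Submodule R M) :
    ∃ k : ℕ, ∀ m n : ℕ, m ≤ n → k ≤ n - m →
      (I ^ n • (⊤ : Submodule R M)) ⊓ N ≤ I ^ m • N := by
  let R' := ULift.{_, _} R
  let M' := ULift.{_, _} M
  haveI : IsNoetherianRing R' := isNoetherianRing_of_ringEquiv R ULift.ringEquiv.symm
  haveI : Module.Finite R' M' := Module.Finite.of_restrictScalars_finite R _ _
  let e : R ≃+* R' := ULift.ringEquiv.symm
  let I' : Ideal R' := I.map e
  obtain ⟨k, hk⟩ := Ideal.exists_pow_inf_eq_pow_smul I' (Submodule.upLift N : Submodule R' M')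
  refine ⟨k, fun m n hmn hknm => ?_⟩
  have hkn : k ≤ n := le_trans hknm (Nat.sub_le n m)
  have hmnk : m ≤ n - k := by omega
  intro x hx
  have hup : Submodule.upLift (⊤ : Submodule R M) = (⊤ : Submodule R' M') := rfl
  have h1 : (⟨x⟩ : M') ∈ I' ^ n • (⊤ : Submodule R' M') ⊓ Submodule.upLift N := by
    constructor
    · rw [show I' ^ n = (I ^ n).map e from (Ideal.map_pow e I n).symm, ← hup, smul_upLift]
      exact hx.1
    · exact hx.2
  have h2 : (⟨x⟩ : M') ∈ I' ^ m • Submodule.upLift N := by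
    have := (hk n hkn).le.trans
      (le_trans (Submodule.smul_mono le_rfl inf_le_right)
        (Submodule.smul_mono (Ideal.pow_le_pow_right hmnk) le_rfl))
    exact this h1
  rw [show I' ^ m = (I ^ m).map e from (Ideal.map_pow e I m).symm, smul_upLift,
    Submodule.mem_upLift] at h2
  exact h2
end

section
/- Let f : A → B be a homomorphism of commutative rings that has a retraction in the category of A-algebras, i.e. a ring map r : B → A with r ∘ f = id_A. Then the augmented Amitsur complex 0 → A → B → B ⊗_A B → B ⊗_A B ⊗_A B → ⋯, with differentials given by alternating sums of the coprojection (unit insertion) maps, is exact (in fact chain-null-homotopic via a homotopy built from r). -/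
open TensorProduct

universe u

variable (A B : Type u) [CommRing A] [CommRing B] [Algebra A B]

/-- `AmitsurPow A B n` is the `n`-fold tensor power `B ⊗[A] ⋯ ⊗[A] B`, with
`AmitsurPow A B 0 = A`. -/
noncomputable def AmitsurPow (n : ℕ) : ModuleCat.{u} A :=
  Nat.rec (ModuleCat.of A A) (fun _ Tn => ModuleCat.of A (Tn ⊗[A] B)) n

/-- The `i`-th coface (unit-insertion) map `B^{⊗ n} → B^{⊗ (n+1)}`, inserting a `1`
into the `i`-th tensor slot. -/
noncomputable def amitsurIns :
    ∀ n : ℕ, Fin (n + 1) → ((AmitsurPow A B n) →ₗ[A] (AmitsurPow A B (n + 1)))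
  | 0, _ => (TensorProduct.mk A (AmitsurPow A B 0) B).flip 1
  | n + 1, i =>
    Fin.lastCases
      ((TensorProduct.mk A (AmitsurPow A B (n + 1)) B).flip 1)
      (fun j => TensorProduct.map (amitsurIns n j) (LinearMap.id (R := A) (M := B)))
      i

/-- The Amitsur differential `B^{⊗ n} → B^{⊗ (n+1)}`, the alternating sum of the
unit-insertion maps.  In degree `0` it is the structure map `A → B`. -/
noncomputable def amitsurD (n : ℕ) : (AmitsurPow A B n) →ₗ[A] (AmitsurPow A B (n + 1)) :=
  ∑ i : Fin (n + 1), ((-1 : ℤ) ^ (i : ℕ)) • amitsurIns A B n i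

noncomputable def amitsurE (n : ℕ) : (AmitsurPow A B n) →ₗ[A] (AmitsurPow A B (n + 1)) :=
  (TensorProduct.mk A (AmitsurPow A B n) B).flip 1

lemma amitsurD_zero : amitsurD A B 0 = amitsurE A B 0 := by
  simp [amitsurD, amitsurIns, amitsurE]
  exact one_smul _ _

noncomputable def amitsurM {m n : ℕ}
    (f : (AmitsurPow A B m) →ₗ[A] (AmitsurPow A B n)) :
    (AmitsurPow A B (m + 1)) →ₗ[A] (AmitsurPow A B (n + 1)) :=
  TensorProduct.map f (LinearMap.id (R := A) (M := B))

lemma amitsurIns_castSucc (n : ℕ) (j : Fin (n + 1)) :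
    amitsurIns A B (n + 1) j.castSucc
      = amitsurM A B (amitsurIns A B n j) := by
  simp [amitsurIns, amitsurM]
  exact Fin.lastCases_castSucc ..

lemma amitsurIns_last (n : ℕ) :
    amitsurIns A B (n + 1) (Fin.last (n + 1)) = amitsurE A B (n + 1) := by
  simp [amitsurIns, amitsurE]
  exact Fin.lastCases_last

lemma amitsurD_succ (n : ℕ) :
    amitsurD A B (n + 1)
      = amitsurM A B (amitsurD A B n)
        + ((-1 : ℤ) ^ (n + 1)) • amitsurE A B (n + 1) := by
  have hM : ∀ (f : (AmitsurPow A B n) →ₗ[A] (AmitsurPow A B (n + 1))),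
      amitsurM A B f = LinearMap.rTensor (R := A) B f := fun _ => rfl
  rw [amitsurD, Fin.sum_univ_castSucc, amitsurIns_last, amitsurD, hM]
  congr 1
  rw [← LinearMap.coe_rTensorHom, map_sum]
  refine Finset.sum_congr rfl fun j _ => ?_
  rw [map_zsmul, LinearMap.coe_rTensorHom, amitsurIns_castSucc, hM, Fin.coe_castSucc]
  rfl

lemma amitsurM_comp {m n k : ℕ} (f : (AmitsurPow A B n) →ₗ[A] (AmitsurPow A B k))
    (g : (AmitsurPow A B m) →ₗ[A] (AmitsurPow A B n)) :
    (amitsurM A B f).comp (amitsurM A B g) = amitsurM A B (f.comp g) := by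
  refine TensorProduct.ext' fun x b => ?_
  rfl

lemma amitsurM_zero {m n : ℕ} :
    amitsurM A B (0 : (AmitsurPow A B m) →ₗ[A] (AmitsurPow A B n)) = 0 := by
  refine TensorProduct.ext' fun x b => ?_
  simp only [amitsurM, TensorProduct.map_zero_left]
  exact TensorProduct.zero_tmul (R := A) (M := AmitsurPow A B n) (N := B) b

lemma amitsurE_comm {m n : ℕ} (f : (AmitsurPow A B m) →ₗ[A] (AmitsurPow A B n)) :
    (amitsurE A B n).comp f = (amitsurM A B f).comp (amitsurE A B m) := by
  ext x
  rfl

lemma amitsurD_comp_amitsurD (n : ℕ) :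
    (amitsurD A B (n + 1)).comp (amitsurD A B n) = 0 := by
  induction n with
  | zero =>
    rw [amitsurD_succ A B 0, LinearMap.add_comp, LinearMap.smul_comp, amitsurD_zero,
      ← amitsurE_comm]
    simp
  | succ n ih =>
    have h1 : (amitsurE A B (n + 2)).comp (amitsurD A B (n + 1))
        = (amitsurM A B (amitsurD A B (n + 1))).comp (amitsurE A B (n + 1)) :=
      amitsurE_comm A B _
    have h2 : (amitsurM A B (amitsurD A B (n + 1))).comp (amitsurM A B (amitsurD A B n))
        = amitsurM A B ((amitsurD A B (n + 1)).comp (amitsurD A B n)) :=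
      amitsurM_comp A B _ _
    rw [amitsurD_succ A B (n + 1), LinearMap.add_comp, LinearMap.smul_comp, h1]
    nth_rewrite 2 [amitsurD_succ A B n]
    rw [LinearMap.comp_add, LinearMap.comp_smul, h2, ih, amitsurM_zero]
    rw [pow_succ (-1 : ℤ) (n + 1)]
    module

noncomputable def amitsurH (r : B →ₐ[A] A) (n : ℕ) :
    (AmitsurPow A B (n + 1)) →ₗ[A] (AmitsurPow A B n) :=
  TensorProduct.lift (((LinearMap.lsmul A (AmitsurPow A B n)).comp r.toLinearMap).flip)

lemma amitsurH_comp_e (r : B →ₐ[A] A) (n : ℕ) :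
    (amitsurH A B r n).comp (amitsurE A B n) = LinearMap.id := by
  refine LinearMap.ext fun x => ?_
  show (amitsurH A B r n) (x ⊗ₜ[A] (1 : B)) = x
  erw [TensorProduct.lift.tmul]
  show r (1 : B) • x = x
  rw [map_one, one_smul]

lemma amitsurH_comp_M (r : B →ₐ[A] A) {m n : ℕ}
    (f : (AmitsurPow A B m) →ₗ[A] (AmitsurPow A B n)) :
    (amitsurH A B r n).comp (amitsurM A B f) = f.comp (amitsurH A B r m) := by
  refine TensorProduct.ext' fun x b => ?_
  show (amitsurH A B r n) (f x ⊗ₜ[A] b) = f ((amitsurH A B r m) (x ⊗ₜ[A] b))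
  erw [TensorProduct.lift.tmul, TensorProduct.lift.tmul]
  show r b • f x = f (r b • x)
  exact (LinearMap.map_smul f (r b) x).symm

/-- If the ring map `A → B` admits a retraction in the category of `A`-algebras
(an `A`-algebra homomorphism `r : B → A`), then the augmented Amitsur complex
`0 → A → B → B ⊗[A] B → ⋯` is chain-null-homotopic (via a homotopy built from `r`),
and in particular exact. -/
theorem amitsur_complex_exact_of_retraction
    (r : B →ₐ[A] A) :
    (∃ s : ∀ n : ℕ, ((AmitsurPow A B (n + 1)) →ₗ[A] (AmitsurPow A B n)),
      (s 0).comp (amitsurD A B 0) = LinearMap.id ∧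
      ∀ n : ℕ, (amitsurD A B n).comp (s n) + (s (n + 1)).comp (amitsurD A B (n + 1)) =
        LinearMap.id) ∧
    Function.Injective (amitsurD A B 0) ∧
    ∀ n : ℕ, LinearMap.ker (amitsurD A B (n + 1)) = LinearMap.range (amitsurD A B n) := by
  set s : ∀ n : ℕ, ((AmitsurPow A B (n + 1)) →ₗ[A] (AmitsurPow A B n)) :=
    fun n => ((-1 : ℤ) ^ n) • amitsurH A B r n with hs
  have hs0 : (s 0).comp (amitsurD A B 0) = LinearMap.id := by
    rw [hs]
    simp only [pow_zero, one_smul]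
    rw [amitsurD_zero, amitsurH_comp_e]
  have hhom : ∀ n : ℕ,
      (amitsurD A B n).comp (s n) + (s (n + 1)).comp (amitsurD A B (n + 1)) =
        LinearMap.id := by
    intro n
    rw [hs]
    simp only []
    rw [amitsurD_succ A B n, LinearMap.comp_smul, LinearMap.smul_comp,
      LinearMap.comp_add, amitsurH_comp_M, LinearMap.comp_smul, amitsurH_comp_e]
    have hev : ((-1 : ℤ)) ^ (n + 1 + (n + 1)) = 1 := Even.neg_one_pow ⟨n + 1, rfl⟩
    rw [smul_add, smul_smul, ← pow_add, hev, one_smul, ← add_assoc, ← add_smul, pow_succ]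
    simp
  refine ⟨⟨s, hs0, hhom⟩, ?_, ?_⟩
  · intro x y hxy
    have h1 := DFunLike.congr_fun hs0 x
    have h2 := DFunLike.congr_fun hs0 y
    simp only [LinearMap.coe_comp, Function.comp_apply, LinearMap.id_coe, id_eq] at h1 h2
    rw [← h1, ← h2, hxy]
  · intro n
    ext x
    constructor
    · intro hx
      rw [LinearMap.mem_ker] at hx
      have h := DFunLike.congr_fun (hhom n) x
      simp only [LinearMap.add_apply, LinearMap.coe_comp, Function.comp_apply,
        LinearMap.id_coe, id_eq, hx, map_zero, add_zero] at h
      exact ⟨s n x, h⟩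
    · rintro ⟨y, rfl⟩
      rw [LinearMap.mem_ker]
      have := DFunLike.congr_fun (amitsurD_comp_amitsurD A B n) y
      simpa using this
end
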